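/- Let a be an n×m real matrix with a_{ij} ≥ 0 and let r > 0. For every pair (u,v) with u_i ≥ 0, v_i ≥ 0, ∑_{i=1}^n u_i² = r and ∑_{i=1}^n v_i² = r, there exists c ∈ ℝⁿ with ∑_{i=1}^n c_i² = r such that ∏_{j=1}^m ∑_{i=1}^n c_i² a_{ij} ≥ ∏_{j=1}^m ∑_{i=1}^n u_i v_i a_{ij}. Consequently the maximum of the one-variable likelihood l over the sphere equals the maximum of the two-variable likelihood l̄ over the product of spheres. -/

import Mathlib

/-!
Replacing `u i` and `v i` by their root mean square `√((u i ^ 2 + v i ^ 2) / 2)` keeps the point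
on the sphere and, by `2 u v ≤ u ^ 2 + v ^ 2` and nonnegativity of `a`, can only increase every
factor of the likelihood. Conversely `c ↦ (|c|, |c|)` embeds the one-variable values into the
two-variable ones, so the two sets of values dominate each other and have the same supremum.
-/

open Finset

variable {ι κ : Type*}

noncomputable def rms (u v : ι → ℝ) (i : ι) : ℝ := √((u i ^ 2 + v i ^ 2) / 2)

theorem rms_sq (u v : ι → ℝ) (i : ι) : rms u v i ^ 2 = (u i ^ 2 + v i ^ 2) / 2 :=
  Real.sq_sqrt (by positivity)

theorem sum_rms_sq [Fintype ι] (u v : ι → ℝ) :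
    ∑ i, rms u v i ^ 2 = (∑ i, u i ^ 2 + ∑ i, v i ^ 2) / 2 := by
  simp only [rms_sq, ← sum_div, sum_add_distrib]

section Likelihood

variable [Fintype ι] [Fintype κ] (a : ι → κ → ℝ)

def likelihood (c : ι → ℝ) : ℝ := ∏ j, ∑ i, c i ^ 2 * a i j

def pairLikelihood (u v : ι → ℝ) : ℝ := ∏ j, ∑ i, u i * v i * a i j

theorem likelihood_eq_pairLikelihood_abs (c : ι → ℝ) :
    likelihood a c = pairLikelihood a (fun i => |c i|) (fun i => |c i|) := by
  simp only [likelihood, pairLikelihood, abs_mul_abs_self, sq]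

theorem pairLikelihood_le_likelihood_rms (ha : ∀ i j, 0 ≤ a i j)
    {u v : ι → ℝ} (hu : ∀ i, 0 ≤ u i) (hv : ∀ i, 0 ≤ v i) :
    pairLikelihood a u v ≤ likelihood a (rms u v) := by
  refine prod_le_prod (fun j _ => sum_nonneg fun i _ =>
    mul_nonneg (mul_nonneg (hu i) (hv i)) (ha i j)) fun j _ => sum_le_sum fun i _ => ?_
  refine mul_le_mul_of_nonneg_right ?_ (ha i j)
  rw [rms_sq]
  linarith [two_mul_le_add_sq (u i) (v i)]

end Likelihood

theorem stmt_1_general (n m : ℕ) (a : Fin n → Fin m → ℝ) (ha : ∀ i j, 0 ≤ a i j)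
    (r : ℝ) :
    (∀ u v : Fin n → ℝ, (∀ i, 0 ≤ u i) → (∀ i, 0 ≤ v i) →
      (∑ i, (u i) ^ 2 = r) → (∑ i, (v i) ^ 2 = r) →
      ∃ c : Fin n → ℝ, (∑ i, (c i) ^ 2 = r) ∧
        (∏ j, ∑ i, u i * v i * a i j) ≤ ∏ j, ∑ i, (c i) ^ 2 * a i j) ∧
    sSup {x : ℝ | ∃ c : Fin n → ℝ, (∑ i, (c i) ^ 2 = r) ∧
        x = ∏ j, ∑ i, (c i) ^ 2 * a i j} =
      sSup {x : ℝ | ∃ u v : Fin n → ℝ, (∀ i, 0 ≤ u i) ∧ (∀ i, 0 ≤ v i) ∧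
        (∑ i, (u i) ^ 2 = r) ∧ (∑ i, (v i) ^ 2 = r) ∧
        x = ∏ j, ∑ i, u i * v i * a i j} := by
  have dominated : ∀ u v : Fin n → ℝ, (∀ i, 0 ≤ u i) → (∀ i, 0 ≤ v i) →
      (∑ i, (u i) ^ 2 = r) → (∑ i, (v i) ^ 2 = r) →
      ∃ c : Fin n → ℝ, (∑ i, (c i) ^ 2 = r) ∧
        (∏ j, ∑ i, u i * v i * a i j) ≤ ∏ j, ∑ i, (c i) ^ 2 * a i j :=
    fun u v hu hv hsu hsv =>
      ⟨rms u v, by rw [sum_rms_sq, hsu, hsv]; ring, pairLikelihood_le_likelihood_rms a ha hu hv⟩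
  refine ⟨dominated, csSup_eq_csSup_of_forall_exists_le ?_ ?_⟩
  · rintro x ⟨c, hc, rfl⟩
    have hc_abs : ∑ i, |c i| ^ 2 = r := by simpa only [sq_abs] using hc
    exact ⟨_, ⟨_, _, fun i => abs_nonneg (c i), fun i => abs_nonneg (c i), hc_abs, hc_abs,
      likelihood_eq_pairLikelihood_abs a c⟩, le_rfl⟩
  · rintro x ⟨u, v, hu, hv, hsu, hsv, rfl⟩
    obtain ⟨c, hc, hle⟩ := dominated u v hu hv hsu hsv
    exact ⟨_, ⟨c, hc, rfl⟩, hle⟩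

/-- For every feasible pair (u,v) there is a point c on the sphere whose one-variable
likelihood is at least the two-variable likelihood of (u,v); consequently the maximum
of the one-variable likelihood over the sphere equals the maximum of the two-variable
likelihood over the product of spheres. -/
theorem stmt_1 (n m : ℕ) (a : Fin n → Fin m → ℝ) (ha : ∀ i j, 0 ≤ a i j)
    (r : ℝ) (hr : 0 < r) :
    (∀ u v : Fin n → ℝ, (∀ i, 0 ≤ u i) → (∀ i, 0 ≤ v i) →
      (∑ i, (u i) ^ 2 = r) → (∑ i, (v i) ^ 2 = r) →
      ∃ c : Fin n → ℝ, (∑ i, (c i) ^ 2 = r) ∧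
        (∏ j, ∑ i, u i * v i * a i j) ≤ ∏ j, ∑ i, (c i) ^ 2 * a i j) ∧
    sSup {x : ℝ | ∃ c : Fin n → ℝ, (∑ i, (c i) ^ 2 = r) ∧
        x = ∏ j, ∑ i, (c i) ^ 2 * a i j} =
      sSup {x : ℝ | ∃ u v : Fin n → ℝ, (∀ i, 0 ≤ u i) ∧ (∀ i, 0 ≤ v i) ∧
        (∑ i, (u i) ^ 2 = r) ∧ (∑ i, (v i) ^ 2 = r) ∧
        x = ∏ j, ∑ i, u i * v i * a i j} :=
  stmt_1_general n m a ha r
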